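/- Let d ∈ ℕ, d ≥ 1, and let E be a linear map on the d×d complex matrices that is trace-preserving and 2-positive, meaning that the map E ⊗ id₂, which applies E to each of the four d×d blocks of a 2d×2d matrix, sends positive semidefinite matrices to positive semidefinite matrices. Then F(σ, ρ) ≤ F(E(σ), E(ρ)) for all density matrices σ, ρ. -/

import Mathlib

/-!
Fidelity has the variational description
`F(σ, ρ) = max {Re tr X : [[σ, X], [Xᴴ, ρ]] ≥ 0}`.
A 2-positive map sends a feasible `X` for `(σ, ρ)` to a feasible `E X` for `(E σ, E ρ)`, and a
trace-preserving one keeps its trace, so the maximum can only grow.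

Both halves of the variational formula come from a polar decomposition `G = U R`, `R = |G|`, with
a contraction `U`, built from the pseudoinverse of `R` given by the functional calculus. The
maximum is attained at `X = σ^{1/2} U ρ^{1/2}` where `σ^{1/2} ρ^{1/2} = U |σ^{1/2} ρ^{1/2}|`.
For the upper bound, factor the block matrix as a Gram matrix; then `Re tr X` becomes
`Re tr ((V r)ᴴ (U r))` with contractions `U`, `V` and `r² = |σ^{1/2} ρ^{1/2}|`, and
`tr (((V - U) r)ᴴ ((V - U) r)) ≥ 0` bounds it by `tr r²`.
-/

open scoped ComplexOrder
open Matrix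

open scoped Classical in
/-- The positive semidefinite square root of a positive semidefinite matrix
(junk value `0` if the matrix is not positive semidefinite). -/
noncomputable def matSqrt {d : ℕ} (M : Matrix (Fin d) (Fin d) ℂ) : Matrix (Fin d) (Fin d) ℂ :=
  if h : M.PosSemidef then
    (h.1.eigenvectorUnitary : Matrix (Fin d) (Fin d) ℂ) *
      diagonal ((↑) ∘ Real.sqrt ∘ h.1.eigenvalues) *
      (star h.1.eigenvectorUnitary : Matrix (Fin d) (Fin d) ℂ)
  else 0

/-- The absolute value `|X| = (Xᴴ X)^{1/2}` of a matrix. -/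
noncomputable def matAbs {d : ℕ} (X : Matrix (Fin d) (Fin d) ℂ) : Matrix (Fin d) (Fin d) ℂ :=
  matSqrt (Xᴴ * X)

/-- The fidelity `F(σ, ρ) = tr |σ^{1/2} ρ^{1/2}|` of two matrices, as a real number. -/
noncomputable def matFid {d : ℕ} (σ ρ : Matrix (Fin d) (Fin d) ℂ) : ℝ :=
  ((matAbs (matSqrt σ * matSqrt ρ)).trace).re

open scoped MatrixOrder

theorem matSqrt_eq_sqrt {d : ℕ} {M : Matrix (Fin d) (Fin d) ℂ} (hM : M.PosSemidef) :
    matSqrt M = CFC.sqrt M := by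
  rw [matSqrt, dif_pos hM, CFC.sqrt_eq_real_sqrt M hM.nonneg, cfcₙ_eq_cfc, hM.1.cfc_eq]
  rfl

namespace Matrix

variable {𝕜 : Type*} [RCLike 𝕜] {m n : Type*} [Fintype m] [Fintype n] [DecidableEq n]

theorem conjTranspose_sqrt (A : Matrix n n 𝕜) : (CFC.sqrt A)ᴴ = CFC.sqrt A :=
  (CFC.sqrt_nonneg A).isSelfAdjoint.star_eq

theorem exists_contraction_mul_eq {G : Matrix m n 𝕜} {R : Matrix n n 𝕜} (hR : IsSelfAdjoint R)
    (hG : Gᴴ * G = R * R) : ∃ U : Matrix m n 𝕜, U * R = G ∧ Uᴴ * U ≤ 1 ∧ Uᴴ * U * R = R := by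
  have hmul (f g : ℝ → ℝ) : cfc f R * cfc g R = cfc (fun x ↦ f x * g x) R :=
    (cfc_mul f g R (R.finite_real_spectrum.continuousOn f)
      (R.finite_real_spectrum.continuousOn g)).symm
  have hid : cfc (fun x : ℝ ↦ x) R = R := cfc_id' ℝ R hR
  -- `R' := cfc (·⁻¹) R` is the Moore–Penrose pseudoinverse of `R`, since `(0 : ℝ)⁻¹ = 0`.
  set R' := cfc (·⁻¹ : ℝ → ℝ) R
  have hR'_adj : R'ᴴ = R' := (cfc_predicate (·⁻¹ : ℝ → ℝ) R).star_eq
  have hRR'R : R * R' * R = R := by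
    calc R * R' * R = cfc (fun x : ℝ ↦ x) R * cfc (·⁻¹ : ℝ → ℝ) R * cfc (fun x : ℝ ↦ x) R := by
          rw [hid]
      _ = R := by
          rw [hmul, hmul]
          exact (cfc_congr fun x _ ↦ by by_cases hx : x = 0 <;> simp [hx]).trans hid
  have hproj : R' * (R * R) * R' = cfc (fun x : ℝ ↦ x⁻¹ * x) R := by
    calc R' * (R * R) * R'
        = cfc (·⁻¹ : ℝ → ℝ) R * (cfc (fun x : ℝ ↦ x) R * cfc (fun x : ℝ ↦ x) R) *
            cfc (·⁻¹ : ℝ → ℝ) R := by rw [hid]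
      _ = _ := by
          rw [hmul, hmul, hmul]
          exact cfc_congr fun x _ ↦ by by_cases hx : x = 0 <;> field_simp [hx]
  have hker : G * (1 - R' * R) = 0 := by
    have hR0 : R * (1 - R' * R) = 0 := by
      rw [Matrix.mul_sub, Matrix.mul_one, ← Matrix.mul_assoc, hRR'R, sub_self]
    rw [← conjTranspose_mul_self_eq_zero, conjTranspose_mul, Matrix.mul_assoc,
      ← Matrix.mul_assoc Gᴴ, hG, Matrix.mul_assoc, hR0, Matrix.mul_zero, Matrix.mul_zero]
  have hUU : (G * R')ᴴ * (G * R') = cfc (fun x : ℝ ↦ x⁻¹ * x) R := by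
    rw [conjTranspose_mul, hR'_adj, Matrix.mul_assoc, ← Matrix.mul_assoc Gᴴ, hG,
      ← Matrix.mul_assoc, hproj]
  refine ⟨G * R', ?_, ?_, ?_⟩
  · rwa [Matrix.mul_sub, Matrix.mul_one, sub_eq_zero, eq_comm, ← Matrix.mul_assoc] at hker
  · rw [hUU]
    exact cfc_le_one _ _ fun x _ ↦ by by_cases hx : x = 0 <;> simp [hx]
  · calc (G * R')ᴴ * (G * R') * R
        = cfc (fun x : ℝ ↦ x⁻¹ * x) R * cfc (fun x : ℝ ↦ x) R := by rw [hUU, hid]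
      _ = R := by
          rw [hmul]
          exact (cfc_congr fun x _ ↦ by by_cases hx : x = 0 <;> simp [hx]).trans hid

section

variable {k : Type*} [Fintype k]

theorem re_trace_conjTranspose_mul_self_mul_le (A : Matrix n k 𝕜) {V : Matrix m n 𝕜}
    (hV : Vᴴ * V ≤ 1) :
    RCLike.re ((V * A)ᴴ * (V * A)).trace ≤ RCLike.re (Aᴴ * A).trace := by
  have h := RCLike.nonneg_iff.mp ((le_iff.mp hV).conjTranspose_mul_mul_same A).trace_nonneg |>.1
  rw [Matrix.mul_sub, Matrix.sub_mul, Matrix.mul_one, trace_sub, map_sub, sub_nonneg] at h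
  simpa only [conjTranspose_mul, Matrix.mul_assoc] using h

theorem re_trace_conjTranspose_mul_mul_le (A : Matrix n k 𝕜) {U V : Matrix m n 𝕜}
    (hU : Uᴴ * U ≤ 1) (hV : Vᴴ * V ≤ 1) :
    RCLike.re ((V * A)ᴴ * (U * A)).trace ≤ RCLike.re (Aᴴ * A).trace := by
  have h :=
    RCLike.nonneg_iff.mp (posSemidef_conjTranspose_mul_self (V * A - U * A)).trace_nonneg |>.1
  have hsymm : RCLike.re ((U * A)ᴴ * (V * A)).trace = RCLike.re ((V * A)ᴴ * (U * A)).trace := by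
    rw [← conjTranspose_conjTranspose (V * A), ← conjTranspose_mul, trace_conjTranspose,
      conjTranspose_conjTranspose, RCLike.star_def, RCLike.conj_re]
  rw [conjTranspose_sub, Matrix.sub_mul, Matrix.mul_sub, Matrix.mul_sub, trace_sub, trace_sub,
    trace_sub, map_sub, map_sub, map_sub, hsymm] at h
  linarith [re_trace_conjTranspose_mul_self_mul_le A hU,
    re_trace_conjTranspose_mul_self_mul_le A hV]

end

theorem re_trace_conjTranspose_mul_le {G U : Matrix m n 𝕜} {H : Matrix n n 𝕜} (hH : 0 ≤ H)
    (hGH : Gᴴ * G = H * H) (hU : Uᴴ * U ≤ 1) :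
    RCLike.re (Gᴴ * U).trace ≤ RCLike.re H.trace := by
  obtain ⟨V, rfl, hV, -⟩ := exists_contraction_mul_eq hH.isSelfAdjoint hGH
  obtain ⟨r, hr, rfl⟩ : ∃ r : Matrix n n 𝕜, rᴴ = r ∧ r * r = H :=
    ⟨CFC.sqrt H, conjTranspose_sqrt H, CFC.sqrt_mul_sqrt_self H⟩
  have htr : ((V * (r * r))ᴴ * U).trace = ((V * r)ᴴ * (U * r)).trace := by
    simp only [conjTranspose_mul, hr, Matrix.mul_assoc]
    rw [trace_mul_comm r (r * _)]
    simp only [Matrix.mul_assoc]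
  have := re_trace_conjTranspose_mul_mul_le r hU hV
  rwa [hr, ← htr] at this

theorem PosSemidef.exists_fromBlocks_eq_gram {l : Type*} [Fintype l] [DecidableEq l]
    {P : Matrix n n 𝕜} {Y : Matrix n l 𝕜} {Z : Matrix l n 𝕜} {Q : Matrix l l 𝕜}
    (h : (fromBlocks P Y Z Q).PosSemidef) :
    ∃ (C₁ : Matrix (n ⊕ l) n 𝕜) (C₂ : Matrix (n ⊕ l) l 𝕜),
      P = C₁ᴴ * C₁ ∧ Y = C₁ᴴ * C₂ ∧ Q = C₂ᴴ * C₂ := by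
  have hC : (CFC.sqrt (fromBlocks P Y Z Q))ᴴ * CFC.sqrt (fromBlocks P Y Z Q) =
      fromBlocks P Y Z Q := by
    rw [conjTranspose_sqrt]
    exact CFC.sqrt_mul_sqrt_self _ h.nonneg
  rw [← fromCols_toCols (CFC.sqrt _), conjTranspose_fromCols_eq_fromRows_conjTranspose,
    fromRows_mul_fromCols, fromBlocks_inj] at hC
  exact ⟨_, _, hC.1.symm, hC.2.1.symm, hC.2.2.2.symm⟩

theorem re_trace_le_of_fromBlocks_posSemidef {P Y Z Q : Matrix n n 𝕜}
    (h : (fromBlocks P Y Z Q).PosSemidef) :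
    RCLike.re Y.trace ≤ RCLike.re (CFC.abs (CFC.sqrt P * CFC.sqrt Q)).trace := by
  obtain ⟨C₁, C₂, rfl, rfl, rfl⟩ := h.exists_fromBlocks_eq_gram
  set a := CFC.sqrt (C₁ᴴ * C₁)
  set b := CFC.sqrt (C₂ᴴ * C₂)
  have haa : a * a = C₁ᴴ * C₁ :=
    CFC.sqrt_mul_sqrt_self _ (posSemidef_conjTranspose_mul_self C₁).nonneg
  have hbb : b * b = C₂ᴴ * C₂ :=
    CFC.sqrt_mul_sqrt_self _ (posSemidef_conjTranspose_mul_self C₂).nonneg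
  obtain ⟨U, hUb, hU, -⟩ := exists_contraction_mul_eq (CFC.sqrt_nonneg _).isSelfAdjoint hbb.symm
  have htr : (C₁ᴴ * C₂).trace = ((C₁ * b)ᴴ * U).trace := by
    rw [← hUb, conjTranspose_mul, conjTranspose_sqrt, ← Matrix.mul_assoc, trace_mul_comm,
      Matrix.mul_assoc]
  have hgram : (C₁ * b)ᴴ * (C₁ * b) = CFC.abs (a * b) * CFC.abs (a * b) := by
    rw [CFC.abs_mul_abs, star_eq_conjTranspose, conjTranspose_mul, conjTranspose_mul,
      conjTranspose_sqrt, conjTranspose_sqrt, Matrix.mul_assoc, Matrix.mul_assoc,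
      ← Matrix.mul_assoc C₁ᴴ, ← Matrix.mul_assoc a, haa]
  rw [htr]
  exact re_trace_conjTranspose_mul_le (CFC.abs_nonneg _) hgram hU

theorem exists_fromBlocks_posSemidef_trace_eq {σ ρ : Matrix n n 𝕜} (hσ : σ.PosSemidef)
    (hρ : ρ.PosSemidef) : ∃ X : Matrix n n 𝕜, (fromBlocks σ X Xᴴ ρ).PosSemidef ∧
      X.trace = (CFC.abs (CFC.sqrt σ * CFC.sqrt ρ)).trace := by
  set A := CFC.sqrt σ
  set B := CFC.sqrt ρ
  have hAA : A * A = σ := CFC.sqrt_mul_sqrt_self σ hσ.nonneg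
  have hBB : B * B = ρ := CFC.sqrt_mul_sqrt_self ρ hρ.nonneg
  have hA : Aᴴ = A := conjTranspose_sqrt σ
  have hB : Bᴴ = B := conjTranspose_sqrt ρ
  set S := CFC.abs (A * B)
  have hS : Sᴴ = S := (CFC.abs_nonneg (A * B)).isSelfAdjoint.star_eq
  obtain ⟨U, hUS, hU, hUUS⟩ :=
    exists_contraction_mul_eq (CFC.abs_nonneg (A * B)).isSelfAdjoint (CFC.abs_mul_abs (A * B)).symm
  refine ⟨A * U * B, ?_, ?_⟩
  · -- `U` is only a contraction: the Gram matrix of `(A, U B)` falls short of `ρ` by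
    -- `B (1 - Uᴴ U) B`.
    have hsum : fromBlocks σ (A * U * B) (A * U * B)ᴴ ρ =
        (fromCols A (U * B))ᴴ * fromCols A (U * B) +
          (fromCols 0 B)ᴴ * (1 - Uᴴ * U) * fromCols 0 B := by
      rw [conjTranspose_fromCols_eq_fromRows_conjTranspose,
        conjTranspose_fromCols_eq_fromRows_conjTranspose, fromRows_mul_fromCols, fromRows_mul,
        fromRows_mul_fromCols, fromBlocks_add]
      congr 1
      · simp [hA, hAA]
      · simp [hA, Matrix.mul_assoc]
      · simp [hA, hB, Matrix.mul_assoc]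
      · simp [hB, hBB, Matrix.mul_sub, Matrix.sub_mul, Matrix.mul_assoc]
    rw [hsum]
    exact (posSemidef_conjTranspose_mul_self _).add ((le_iff.mp hU).conjTranspose_mul_mul_same _)
  · calc (A * U * B).trace = (U * (A * B)ᴴ).trace := by
          rw [conjTranspose_mul, hA, hB, trace_mul_cycle, trace_mul_comm]
      _ = (Uᴴ * U * S).trace := by
          rw [← hUS, conjTranspose_mul, hS, ← Matrix.mul_assoc, trace_mul_comm, Matrix.mul_assoc]
      _ = S.trace := by rw [hUUS]

end Matrix

theorem matFid_eq_re_trace_abs {d : ℕ} {σ ρ : Matrix (Fin d) (Fin d) ℂ} (hσ : σ.PosSemidef)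
    (hρ : ρ.PosSemidef) : matFid σ ρ = (CFC.abs (CFC.sqrt σ * CFC.sqrt ρ)).trace.re := by
  rw [matFid, matAbs, matSqrt_eq_sqrt hσ, matSqrt_eq_sqrt hρ,
    matSqrt_eq_sqrt (posSemidef_conjTranspose_mul_self _)]
  rfl

theorem fidelity_monotone_of_two_positive_general
    (d : ℕ) (E : Matrix (Fin d) (Fin d) ℂ →ₗ[ℂ] Matrix (Fin d) (Fin d) ℂ)
    (hEtr : ∀ X : Matrix (Fin d) (Fin d) ℂ, (E X).trace = X.trace)
    (h2pos : ∀ a b c e : Matrix (Fin d) (Fin d) ℂ,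
      (Matrix.fromBlocks a b c e).PosSemidef →
      (Matrix.fromBlocks (E a) (E b) (E c) (E e)).PosSemidef)
    (σ ρ : Matrix (Fin d) (Fin d) ℂ) (hσ : σ.PosSemidef)
    (hρ : ρ.PosSemidef) :
    matFid σ ρ ≤ matFid (E σ) (E ρ) := by
  obtain ⟨X, hX, hXtr⟩ := exists_fromBlocks_posSemidef_trace_eq hσ hρ
  have hEX := h2pos _ _ _ _ hX
  have hEσ : (E σ).PosSemidef := hEX.submatrix Sum.inl
  have hEρ : (E ρ).PosSemidef := hEX.submatrix Sum.inr
  calc matFid σ ρ = (E X).trace.re := by rw [matFid_eq_re_trace_abs hσ hρ, hEtr, hXtr]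
    _ ≤ matFid (E σ) (E ρ) := by
        rw [matFid_eq_re_trace_abs hEσ hEρ]
        exact re_trace_le_of_fromBlocks_posSemidef hEX

/-- a trace-preserving, 2-positive (blockwise on `2 × 2` blocks) linear map on
`d × d` complex matrices does not decrease the fidelity of density matrices. -/
theorem fidelity_monotone_of_two_positive
    (d : ℕ) (hd : 1 ≤ d)
    (E : Matrix (Fin d) (Fin d) ℂ →ₗ[ℂ] Matrix (Fin d) (Fin d) ℂ)
    (hEtr : ∀ X : Matrix (Fin d) (Fin d) ℂ, (E X).trace = X.trace)
    (h2pos : ∀ a b c e : Matrix (Fin d) (Fin d) ℂ,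
      (Matrix.fromBlocks a b c e).PosSemidef →
      (Matrix.fromBlocks (E a) (E b) (E c) (E e)).PosSemidef)
    (σ ρ : Matrix (Fin d) (Fin d) ℂ) (hσ : σ.PosSemidef) (hσ1 : σ.trace = 1)
    (hρ : ρ.PosSemidef) (hρ1 : ρ.trace = 1) :
    matFid σ ρ ≤ matFid (E σ) (E ρ) :=
  fidelity_monotone_of_two_positive_general d E hEtr h2pos σ ρ hσ hρ
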